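/- arXiv:1202.5247 — 4 statements merged into one kernel-verified Lean document; each statement's English description precedes it below -/
import Mathlib

section
/- The independence atom y ⊥_x̄ y is equivalent to the dependence atom dep(x̄, y): for every structure M, every team X whose domain contains x̄ and y, M,X ⊨ y ⊥_x̄ y if and only if M,X ⊨ dep(x̄, y), i.e., if and only if all s,s' ∈ X with s(x̄) = s'(x̄) satisfy s(y) = s'(y). -/
open FirstOrder

universe u

namespace TeamSemantics

/-- A (local) generalized quantifier of type ⟨k⟩: to every universe `M` it assigns
a family of k-ary relations on `M`. -/
def Quant (k : ℕ) : Type (u + 1) :=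
  (M : Type u) → Set (Set (Fin k → M))

/-- `Q` is monotone (increasing). -/
def Quant.Mono {k : ℕ} (Q : Quant.{u} k) : Prop :=
  ∀ (M : Type u) (A B : Set (Fin k → M)), A ∈ Q M → A ⊆ B → B ∈ Q M

/-- `Q` is closed under isomorphisms (it is a class of structures `(M,R)`). -/
def Quant.IsoClosed {k : ℕ} (Q : Quant.{u} k) : Prop :=
  ∀ (M N : Type u) (e : M ≃ N) (A : Set (Fin k → M)),
    A ∈ Q M → ((fun a : Fin k → M => fun i => e (a i)) '' A) ∈ Q N

/-- Non-triviality: `(M,∅) ∉ Q` and `(M,M^k) ∈ Q` for all (nonempty) `M`. -/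
def Quant.NonTrivial {k : ℕ} (Q : Quant.{u} k) : Prop :=
  ∀ (M : Type u), Nonempty M → (∅ ∉ Q M ∧ Set.univ ∈ Q M)

/-- The trivially empty quantifier, used as a dummy parameter for `Q`-free logics. -/
def QEmpty (k : ℕ) : Quant.{u} k := fun _ => ∅

/-- Simultaneous update of an assignment at the tuple of variables `xs` by the tuple `a`. -/
def updVec {M : Type u} {k : ℕ} (s : ℕ → M) (xs : Fin k → ℕ) (a : Fin k → M) : ℕ → M :=
  (List.finRange k).foldl (fun t i => Function.update t (xs i) (a i)) s

/-- The set of variables of a first-order term. -/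
def tvarSet {L : FirstOrder.Language.{0, 0}} : L.Term ℕ → Set ℕ
  | .var x => {x}
  | .func _ ts => ⋃ i, tvarSet (ts i)

/-- Formulas (in negation normal form) of dependence/independence logic over `L`,
extended with a generalized quantifier of type ⟨k⟩.  The logics D, FO, FO(Q), D(Q)
and I(Q) are the fragments singled out below. -/
inductive TForm (L : FirstOrder.Language.{0, 0}) (k : ℕ) : Type
  | rel {n : ℕ} (R : L.Relations n) (ts : Fin n → L.Term ℕ)
  | nrel {n : ℕ} (R : L.Relations n) (ts : Fin n → L.Term ℕ)
  | tEq (t t' : L.Term ℕ)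
  | tNe (t t' : L.Term ℕ)
  | dep {n : ℕ} (ts : Fin n → L.Term ℕ) (t : L.Term ℕ)
  | ndep {n : ℕ} (ts : Fin n → L.Term ℕ) (t : L.Term ℕ)
  | indep {a b c : ℕ} (xb : Fin a → ℕ) (yb : Fin b → ℕ) (zb : Fin c → ℕ)
  | and (φ ψ : TForm L k)
  | or (φ ψ : TForm L k)
  | ex (y : ℕ) (φ : TForm L k)
  | all (y : ℕ) (φ : TForm L k)
  | qu (xs : Fin k → ℕ) (φ : TForm L k)

namespace TForm

variable {L : FirstOrder.Language.{0, 0}} {k : ℕ}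

/-- Formulas of dependence logic D (no independence atoms, no generalized quantifier). -/
def IsD : TForm L k → Prop
  | rel _ _ => True
  | nrel _ _ => True
  | tEq _ _ => True
  | tNe _ _ => True
  | dep _ _ => True
  | ndep _ _ => True
  | indep _ _ _ => False
  | and φ ψ => IsD φ ∧ IsD ψ
  | or φ ψ => IsD φ ∧ IsD ψ
  | ex _ φ => IsD φ
  | all _ φ => IsD φ
  | qu _ _ => False

/-- First-order formulas (no dependence/independence atoms, no generalized quantifier). -/
def IsFO : TForm L k → Prop
  | rel _ _ => True
  | nrel _ _ => True
  | tEq _ _ => True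
  | tNe _ _ => True
  | dep _ _ => False
  | ndep _ _ => False
  | indep _ _ _ => False
  | and φ ψ => IsFO φ ∧ IsFO ψ
  | or φ ψ => IsFO φ ∧ IsFO ψ
  | ex _ φ => IsFO φ
  | all _ φ => IsFO φ
  | qu _ _ => False

/-- Formulas of FO(Q) (no dependence/independence atoms). -/
def IsFOQ : TForm L k → Prop
  | rel _ _ => True
  | nrel _ _ => True
  | tEq _ _ => True
  | tNe _ _ => True
  | dep _ _ => False
  | ndep _ _ => False
  | indep _ _ _ => False
  | and φ ψ => IsFOQ φ ∧ IsFOQ ψ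
  | or φ ψ => IsFOQ φ ∧ IsFOQ ψ
  | ex _ φ => IsFOQ φ
  | all _ φ => IsFOQ φ
  | qu _ φ => IsFOQ φ

/-- Formulas of D(Q) (no independence atoms). -/
def IsDQ : TForm L k → Prop
  | rel _ _ => True
  | nrel _ _ => True
  | tEq _ _ => True
  | tNe _ _ => True
  | dep _ _ => True
  | ndep _ _ => True
  | indep _ _ _ => False
  | and φ ψ => IsDQ φ ∧ IsDQ ψ
  | or φ ψ => IsDQ φ ∧ IsDQ ψ
  | ex _ φ => IsDQ φ
  | all _ φ => IsDQ φ
  | qu _ φ => IsDQ φ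

/-- Formulas of I(Q) (independence atoms instead of dependence atoms). -/
def IsIQ : TForm L k → Prop
  | rel _ _ => True
  | nrel _ _ => True
  | tEq _ _ => True
  | tNe _ _ => True
  | dep _ _ => False
  | ndep _ _ => False
  | indep _ _ _ => True
  | and φ ψ => IsIQ φ ∧ IsIQ ψ
  | or φ ψ => IsIQ φ ∧ IsIQ ψ
  | ex _ φ => IsIQ φ
  | all _ φ => IsIQ φ
  | qu _ φ => IsIQ φ

/-- The set of free variables of a formula; all variables of a dependence or
independence atom count as free. -/
def FV : TForm L k → Set ℕ
  | rel _ ts => ⋃ i, tvarSet (ts i)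
  | nrel _ ts => ⋃ i, tvarSet (ts i)
  | tEq t t' => tvarSet t ∪ tvarSet t'
  | tNe t t' => tvarSet t ∪ tvarSet t'
  | dep ts t => (⋃ i, tvarSet (ts i)) ∪ tvarSet t
  | ndep ts t => (⋃ i, tvarSet (ts i)) ∪ tvarSet t
  | indep xb yb zb => Set.range xb ∪ Set.range yb ∪ Set.range zb
  | and φ ψ => FV φ ∪ FV ψ
  | or φ ψ => FV φ ∪ FV ψ
  | ex y φ => FV φ \ {y}
  | all y φ => FV φ \ {y}
  | qu xs φ => FV φ \ Set.range xs

end TForm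

variable {L : FirstOrder.Language.{0, 0}} {k : ℕ}

/-- Team semantics for D(Q)/I(Q).  A team is a set of assignments `ℕ → M`. -/
def TSat (Q : Quant.{u} k) (M : Type u) [L.Structure M] :
    TForm L k → Set (ℕ → M) → Prop
  | .rel R ts, X => ∀ s ∈ X, FirstOrder.Language.Structure.RelMap R (fun i => (ts i).realize s)
  | .nrel R ts, X => ∀ s ∈ X, ¬ FirstOrder.Language.Structure.RelMap R (fun i => (ts i).realize s)
  | .tEq t t', X => ∀ s ∈ X, t.realize s = t'.realize s
  | .tNe t t', X => ∀ s ∈ X, t.realize s ≠ t'.realize s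
  | .dep ts t, X => ∀ s ∈ X, ∀ s' ∈ X,
      (∀ i, (ts i).realize s = (ts i).realize s') → t.realize s = t.realize s'
  | .ndep _ _, X => X = ∅
  | .indep xb yb zb, X => ∀ s ∈ X, ∀ s' ∈ X, (∀ i, s (xb i) = s' (xb i)) →
      ∃ s₀ ∈ X, (∀ i, s₀ (xb i) = s (xb i)) ∧ (∀ i, s₀ (yb i) = s (yb i)) ∧
        (∀ i, s₀ (zb i) = s' (zb i))
  | .and φ ψ, X => TSat Q M φ X ∧ TSat Q M ψ X
  | .or φ ψ, X => ∃ Y Z, X = Y ∪ Z ∧ TSat Q M φ Y ∧ TSat Q M ψ Z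
  | .ex y φ, X => ∃ f : (ℕ → M) → M,
      TSat Q M φ ((fun s => Function.update s y (f s)) '' X)
  | .all y φ, X => TSat Q M φ {s' | ∃ s ∈ X, ∃ a : M, s' = Function.update s y a}
  | .qu xs φ, X => ∃ F : (ℕ → M) → Set (Fin k → M), (∀ s ∈ X, F s ∈ Q M) ∧
      TSat Q M φ {s' | ∃ s ∈ X, ∃ a ∈ F s, s' = updVec s xs a}

/-- Tarskian (single-assignment) semantics for the FO(Q)-fragment
(dependence and independence atoms are given a dummy interpretation). -/
def PSat (Q : Quant.{u} k) (M : Type u) [L.Structure M] :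
    TForm L k → (ℕ → M) → Prop
  | .rel R ts, s => FirstOrder.Language.Structure.RelMap R (fun i => (ts i).realize s)
  | .nrel R ts, s => ¬ FirstOrder.Language.Structure.RelMap R (fun i => (ts i).realize s)
  | .tEq t t', s => t.realize s = t'.realize s
  | .tNe t t', s => t.realize s ≠ t'.realize s
  | .dep _ _, _ => True
  | .ndep _ _, _ => False
  | .indep _ _ _, _ => True
  | .and φ ψ, s => PSat Q M φ s ∧ PSat Q M ψ s
  | .or φ ψ, s => PSat Q M φ s ∨ PSat Q M ψ s
  | .ex y φ, s => ∃ a : M, PSat Q M φ (Function.update s y a)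
  | .all y φ, s => ∀ a : M, PSat Q M φ (Function.update s y a)
  | .qu xs φ, s => {a : Fin k → M | PSat Q M φ (updVec s xs a)} ∈ Q M

/-- Truth of a sentence in a structure: satisfaction by the team of the empty assignment
(rendered with total assignments: every singleton team satisfies the sentence). -/
def TTrue (Q : Quant.{u} k) (M : Type u) [L.Structure M] (φ : TForm L k) : Prop :=
  ∀ s : ℕ → M, TSat Q M φ {s}

/-- `rel(X)`: the k-ary relation induced by a team `X` on the variables `xs`. -/
def relOf {M : Type u} (xs : Fin k → ℕ) (X : Set (ℕ → M)) : Set (Fin k → M) :=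
  (fun s => fun i => s (xs i)) '' X

end TeamSemantics
namespace TeamSemantics

/-- Terms over `L` together with second-order function variables
(`fvar n name ts` is the function variable of arity `n` named `name`,
applied to the terms `ts`). -/
inductive ETerm (L : FirstOrder.Language.{0, 0}) : Type
  | var (x : ℕ)
  | func {n : ℕ} (f : L.Functions n) (ts : Fin n → ETerm L)
  | fvar (n : ℕ) (name : ℕ) (ts : Fin n → ETerm L)

/-- Formulas of ESO(Q) (in negation normal form) over `L`, where `Q` has type ⟨k⟩:
atomic and negated atomic formulas (including second-order relation variables
`rvar`/`nrvar`), conjunction, disjunction, first-order quantifiers, the quantifier `Q`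
(`qu`), and existential second-order relation (`exrel`) and function (`exfun`)
quantifiers. -/
inductive EForm (L : FirstOrder.Language.{0, 0}) (k : ℕ) : Type
  | rel {n : ℕ} (R : L.Relations n) (ts : Fin n → ETerm L)
  | nrel {n : ℕ} (R : L.Relations n) (ts : Fin n → ETerm L)
  | eEq (t t' : ETerm L)
  | eNe (t t' : ETerm L)
  | rvar (n : ℕ) (name : ℕ) (ts : Fin n → ETerm L)
  | nrvar (n : ℕ) (name : ℕ) (ts : Fin n → ETerm L)
  | and (φ ψ : EForm L k)
  | or (φ ψ : EForm L k)
  | ex (x : ℕ) (φ : EForm L k)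
  | all (x : ℕ) (φ : EForm L k)
  | qu (xs : Fin k → ℕ) (φ : EForm L k)
  | exrel (n : ℕ) (name : ℕ) (φ : EForm L k)
  | exfun (n : ℕ) (name : ℕ) (φ : EForm L k)

/-- An assignment of relations to the second-order relation variables. -/
def RAssign (M : Type u) : Type u :=
  (n : ℕ) → ℕ → Set (Fin n → M)

/-- An assignment of functions to the second-order function variables. -/
def FAssign (M : Type u) : Type u :=
  (n : ℕ) → ℕ → ((Fin n → M) → M)

def RAssign.set {M : Type u} (ρ : RAssign M) (n name : ℕ) (R : Set (Fin n → M)) :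
    RAssign M :=
  fun m nm => if h : m = n ∧ nm = name then cast (by rw [h.1]) R else ρ m nm

def FAssign.set {M : Type u} (Fa : FAssign M) (n name : ℕ) (g : (Fin n → M) → M) :
    FAssign M :=
  fun m nm => if h : m = n ∧ nm = name then cast (by rw [h.1]) g else Fa m nm

variable {L : FirstOrder.Language.{0, 0}} {k : ℕ}

/-- Evaluation of an extended term. -/
def ETerm.eval {M : Type u} [L.Structure M] (Fa : FAssign M) (s : ℕ → M) :
    ETerm L → M
  | .var x => s x
  | .func f ts => FirstOrder.Language.Structure.funMap f (fun i => (ts i).eval Fa s)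
  | .fvar n name ts => Fa n name (fun i => (ts i).eval Fa s)

/-- Tarskian satisfaction for ESO(Q). -/
def ESat (Q : Quant.{u} k) (M : Type u) [L.Structure M]
    (ρ : RAssign M) (Fa : FAssign M) (s : ℕ → M) : EForm L k → Prop
  | .rel R ts => FirstOrder.Language.Structure.RelMap R (fun i => (ts i).eval Fa s)
  | .nrel R ts => ¬ FirstOrder.Language.Structure.RelMap R (fun i => (ts i).eval Fa s)
  | .eEq t t' => t.eval Fa s = t'.eval Fa s
  | .eNe t t' => t.eval Fa s ≠ t'.eval Fa s
  | .rvar n name ts => (fun i => (ts i).eval Fa s) ∈ ρ n name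
  | .nrvar n name ts => (fun i => (ts i).eval Fa s) ∉ ρ n name
  | .and φ ψ => ESat Q M ρ Fa s φ ∧ ESat Q M ρ Fa s ψ
  | .or φ ψ => ESat Q M ρ Fa s φ ∨ ESat Q M ρ Fa s ψ
  | .ex x φ => ∃ a : M, ESat Q M ρ Fa (Function.update s x a) φ
  | .all x φ => ∀ a : M, ESat Q M ρ Fa (Function.update s x a) φ
  | .qu xs φ => {a : Fin k → M | ESat Q M ρ Fa (updVec s xs a) φ} ∈ Q M
  | .exrel n name φ => ∃ R : Set (Fin n → M), ESat Q M (ρ.set n name R) Fa s φ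
  | .exfun n name φ => ∃ g : (Fin n → M) → M, ESat Q M ρ (Fa.set n name g) s φ

namespace ETerm

/-- First-order variables occurring in an extended term. -/
def fovars : ETerm L → Set ℕ
  | .var x => {x}
  | .func _ ts => ⋃ i, fovars (ts i)
  | .fvar _ _ ts => ⋃ i, fovars (ts i)

/-- Function variables (arity, name) occurring in an extended term. -/
def ffvars : ETerm L → Set (ℕ × ℕ)
  | .var _ => ∅
  | .func _ ts => ⋃ i, ffvars (ts i)
  | .fvar n name ts => insert (n, name) (⋃ i, ffvars (ts i))

end ETerm

namespace EForm

/-- Free first-order variables of an ESO(Q) formula. -/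
def fv : EForm L k → Set ℕ
  | rel _ ts => ⋃ i, (ts i).fovars
  | nrel _ ts => ⋃ i, (ts i).fovars
  | eEq t t' => t.fovars ∪ t'.fovars
  | eNe t t' => t.fovars ∪ t'.fovars
  | rvar _ _ ts => ⋃ i, (ts i).fovars
  | nrvar _ _ ts => ⋃ i, (ts i).fovars
  | and φ ψ => fv φ ∪ fv ψ
  | or φ ψ => fv φ ∪ fv ψ
  | ex x φ => fv φ \ {x}
  | all x φ => fv φ \ {x}
  | qu xs φ => fv φ \ Set.range xs
  | exrel _ _ φ => fv φ
  | exfun _ _ φ => fv φ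

/-- Free second-order relation variables. -/
def freeRVars : EForm L k → Set (ℕ × ℕ)
  | rel _ _ => ∅
  | nrel _ _ => ∅
  | eEq _ _ => ∅
  | eNe _ _ => ∅
  | rvar n name _ => {(n, name)}
  | nrvar n name _ => {(n, name)}
  | and φ ψ => freeRVars φ ∪ freeRVars ψ
  | or φ ψ => freeRVars φ ∪ freeRVars ψ
  | ex _ φ => freeRVars φ
  | all _ φ => freeRVars φ
  | qu _ φ => freeRVars φ
  | exrel n name φ => freeRVars φ \ {(n, name)}
  | exfun _ _ φ => freeRVars φ

/-- Free second-order function variables. -/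
def freeFVars : EForm L k → Set (ℕ × ℕ)
  | rel _ ts => ⋃ i, (ts i).ffvars
  | nrel _ ts => ⋃ i, (ts i).ffvars
  | eEq t t' => t.ffvars ∪ t'.ffvars
  | eNe t t' => t.ffvars ∪ t'.ffvars
  | rvar _ _ ts => ⋃ i, (ts i).ffvars
  | nrvar _ _ ts => ⋃ i, (ts i).ffvars
  | and φ ψ => freeFVars φ ∪ freeFVars ψ
  | or φ ψ => freeFVars φ ∪ freeFVars ψ
  | ex _ φ => freeFVars φ
  | all _ φ => freeFVars φ
  | qu _ φ => freeFVars φ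
  | exrel _ _ φ => freeFVars φ
  | exfun n name φ => freeFVars φ \ {(n, name)}

/-- A sentence: no free first-order variables and no free second-order variables. -/
def Sentence (φ : EForm L k) : Prop :=
  fv φ = ∅ ∧ freeRVars φ = ∅ ∧ freeFVars φ = ∅

/-- A sentence over the vocabulary `τ ∪ {R}`, where `R` is rendered as the
second-order relation variable of arity `r` named `0`. -/
def SentenceWithR (r : ℕ) (φ : EForm L k) : Prop :=
  fv φ = ∅ ∧ freeRVars φ ⊆ {(r, 0)} ∧ freeFVars φ = ∅

/-- No occurrence of the generalized quantifier `Q`: the formula is in ESO. -/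
def NoQu : EForm L k → Prop
  | rel _ _ => True
  | nrel _ _ => True
  | eEq _ _ => True
  | eNe _ _ => True
  | rvar _ _ _ => True
  | nrvar _ _ _ => True
  | and φ ψ => NoQu φ ∧ NoQu ψ
  | or φ ψ => NoQu φ ∧ NoQu ψ
  | ex _ φ => NoQu φ
  | all _ φ => NoQu φ
  | qu _ _ => False
  | exrel _ _ φ => NoQu φ
  | exfun _ _ φ => NoQu φ

/-- The relation variable `(r, name)` occurs only negatively (and is never rebound). -/
def OnlyNeg (r name : ℕ) : EForm L k → Prop
  | rel _ _ => True
  | nrel _ _ => True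
  | eEq _ _ => True
  | eNe _ _ => True
  | rvar n nm _ => ¬ (n = r ∧ nm = name)
  | nrvar _ _ _ => True
  | and φ ψ => OnlyNeg r name φ ∧ OnlyNeg r name ψ
  | or φ ψ => OnlyNeg r name φ ∧ OnlyNeg r name ψ
  | ex _ φ => OnlyNeg r name φ
  | all _ φ => OnlyNeg r name φ
  | qu _ φ => OnlyNeg r name φ
  | exrel n nm φ => ¬ (n = r ∧ nm = name) ∧ OnlyNeg r name φ
  | exfun _ _ φ => OnlyNeg r name φ

/-- Quantifier-free formulas. -/
def QFree : EForm L k → Prop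
  | rel _ _ => True
  | nrel _ _ => True
  | eEq _ _ => True
  | eNe _ _ => True
  | rvar _ _ _ => True
  | nrvar _ _ _ => True
  | and φ ψ => QFree φ ∧ QFree ψ
  | or φ ψ => QFree φ ∧ QFree ψ
  | ex _ _ => False
  | all _ _ => False
  | qu _ _ => False
  | exrel _ _ _ => False
  | exfun _ _ _ => False

/-- A prefix of first-order quantifiers from `{Q, ∀}` in front of a
quantifier-free formula. -/
def QuantPrefix : EForm L k → Prop
  | all _ φ => QuantPrefix φ
  | qu _ φ => QuantPrefix φ
  | φ => QFree φ

/-- Normal form: `∃f₁ ⋯ ∃fₙ Q′₁x₁ ⋯ Q′ₘxₘ ψ` with each `Q′ᵢ ∈ {Q, ∀}` and `ψ`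
quantifier-free. -/
def NormalForm : EForm L k → Prop
  | exfun _ _ φ => NormalForm φ
  | φ => QuantPrefix φ

/-- No second-order relation variables occur. -/
def NoRVar : EForm L k → Prop
  | rel _ _ => True
  | nrel _ _ => True
  | eEq _ _ => True
  | eNe _ _ => True
  | rvar _ _ _ => False
  | nrvar _ _ _ => False
  | and φ ψ => NoRVar φ ∧ NoRVar ψ
  | or φ ψ => NoRVar φ ∧ NoRVar ψ
  | ex _ φ => NoRVar φ
  | all _ φ => NoRVar φ
  | qu _ φ => NoRVar φ
  | exrel _ _ _ => False
  | exfun _ _ φ => NoRVar φ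

/-- None of the variables in `V` is bound anywhere in the formula. -/
def AvoidsBinding (V : Set ℕ) : EForm L k → Prop
  | rel _ _ => True
  | nrel _ _ => True
  | eEq _ _ => True
  | eNe _ _ => True
  | rvar _ _ _ => True
  | nrvar _ _ _ => True
  | and φ ψ => AvoidsBinding V φ ∧ AvoidsBinding V ψ
  | or φ ψ => AvoidsBinding V φ ∧ AvoidsBinding V ψ
  | ex x φ => x ∉ V ∧ AvoidsBinding V φ
  | all x φ => x ∉ V ∧ AvoidsBinding V φ
  | qu xs φ => (∀ i, xs i ∉ V) ∧ AvoidsBinding V φ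
  | exrel _ _ φ => AvoidsBinding V φ
  | exfun _ _ φ => AvoidsBinding V φ

/-- All function-variable (arity, name) pairs occurring anywhere in the formula,
whether free, bound, or as a binder. -/
def fNames : EForm L k → Set (ℕ × ℕ)
  | rel _ ts => ⋃ i, (ts i).ffvars
  | nrel _ ts => ⋃ i, (ts i).ffvars
  | eEq t t' => t.ffvars ∪ t'.ffvars
  | eNe t t' => t.ffvars ∪ t'.ffvars
  | rvar _ _ ts => ⋃ i, (ts i).ffvars
  | nrvar _ _ ts => ⋃ i, (ts i).ffvars
  | and φ ψ => fNames φ ∪ fNames ψ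
  | or φ ψ => fNames φ ∪ fNames ψ
  | ex _ φ => fNames φ
  | all _ φ => fNames φ
  | qu _ φ => fNames φ
  | exrel _ _ φ => fNames φ
  | exfun n name φ => insert (n, name) (fNames φ)

end EForm

/-- Truth of an ESO(Q) sentence in a structure. -/
def ETrue (Q : Quant.{u} k) (M : Type u) [L.Structure M] (φ : EForm L k) : Prop :=
  ∀ (ρ : RAssign M) (Fa : FAssign M) (s : ℕ → M), ESat Q M ρ Fa s φ

/-- Truth of an ESO(Q) sentence over `τ ∪ {R}` in the structure `(M, R)`,
where the distinguished relation variable of arity `r` named `0` is interpreted as `R`. -/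
def ETrueWithR (Q : Quant.{u} k) (M : Type u) [L.Structure M] {r : ℕ}
    (R : Set (Fin r → M)) (φ : EForm L k) : Prop :=
  ∀ (ρ : RAssign M) (Fa : FAssign M) (s : ℕ → M), ESat Q M (ρ.set r 0 R) Fa s φ

/-- `Q` is definable in ESO: `Q = Mod(φ)` for an ESO-sentence `φ` over the vocabulary
`{R}` with `R` of arity `k` (the empty language plus the distinguished relation
variable of arity `k` named `0`). -/
def ESODefinable (k : ℕ) (Q : Quant.{u} k) : Prop :=
  ∃ φ : EForm FirstOrder.Language.empty 0, φ.NoQu ∧ φ.SentenceWithR k ∧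
    ∀ (M : Type u), Nonempty M → ∀ R : Set (Fin k → M),
      letI := FirstOrder.Language.emptyStructure (M := M)
      (R ∈ Q M ↔ ETrueWithR (QEmpty 0) M R φ)

end TeamSemantics
namespace TeamSemantics

variable {L : FirstOrder.Language.{0, 0}} {k : ℕ}

/-- Replace every occurrence `f(t₁,…,tₘ)` of the function variable `(m, nf)` by
`g(x̄, t₁,…,tₘ)`, where `g` is the function variable `(k + m, ng)`. -/
def ETerm.skolemSubst (k m nf ng : ℕ) (xs : Fin k → ℕ) : ETerm L → ETerm L
  | .var x => .var x
  | .func f ts => .func f (fun i => (ts i).skolemSubst k m nf ng xs)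
  | .fvar n name ts =>
      if h : n = m ∧ name = nf then
        .fvar (k + m) ng (Fin.append (fun i => ETerm.var (xs i))
          (fun j => ((ts (Fin.cast h.1.symm j)).skolemSubst k m nf ng xs)))
      else .fvar n name (fun i => (ts i).skolemSubst k m nf ng xs)

/-- Replace every occurrence `f(t₁,…,tₘ)` of the function variable `(m, nf)` by
`g(x̄, t₁,…,tₘ)` throughout a formula (stopping where `(m, nf)` is rebound). -/
def EForm.skolemSubst (m nf ng : ℕ) (xs : Fin k → ℕ) : EForm L k → EForm L k
  | .rel R ts => .rel R (fun i => (ts i).skolemSubst k m nf ng xs)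
  | .nrel R ts => .nrel R (fun i => (ts i).skolemSubst k m nf ng xs)
  | .eEq t t' => .eEq (t.skolemSubst k m nf ng xs) (t'.skolemSubst k m nf ng xs)
  | .eNe t t' => .eNe (t.skolemSubst k m nf ng xs) (t'.skolemSubst k m nf ng xs)
  | .rvar n name ts => .rvar n name (fun i => (ts i).skolemSubst k m nf ng xs)
  | .nrvar n name ts => .nrvar n name (fun i => (ts i).skolemSubst k m nf ng xs)
  | .and φ ψ => .and (φ.skolemSubst m nf ng xs) (ψ.skolemSubst m nf ng xs)
  | .or φ ψ => .or (φ.skolemSubst m nf ng xs) (ψ.skolemSubst m nf ng xs)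
  | .ex x φ => .ex x (φ.skolemSubst m nf ng xs)
  | .all x φ => .all x (φ.skolemSubst m nf ng xs)
  | .qu zs φ => .qu zs (φ.skolemSubst m nf ng xs)
  | .exrel n name φ => .exrel n name (φ.skolemSubst m nf ng xs)
  | .exfun n name φ =>
      if n = m ∧ name = nf then .exfun n name φ
      else .exfun n name (φ.skolemSubst m nf ng xs)

/-- Every occurrence of a function variable in the term is of the form `fᵢ(x̄ⁱ)`:
it is `fvar (a i) i` applied to the tuple of distinct variables `arg i`. -/
def ETerm.GoodOcc (n : ℕ) (a : Fin n → ℕ) (arg : (i : Fin n) → Fin (a i) → ℕ) :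
    ETerm L → Prop
  | .var _ => True
  | .func _ ts => ∀ j, (ts j).GoodOcc n a arg
  | .fvar nn name ts => ∃ i : Fin n, ∃ h : nn = a i, name = i.val ∧
      ∀ j : Fin nn, ts j = ETerm.var (arg i (Fin.cast h j))

/-- Every occurrence of a function variable in the formula is of the form `fᵢ(x̄ⁱ)`. -/
def EForm.GoodOcc (n : ℕ) (a : Fin n → ℕ) (arg : (i : Fin n) → Fin (a i) → ℕ) :
    EForm L k → Prop
  | .rel _ ts => ∀ i, (ts i).GoodOcc n a arg
  | .nrel _ ts => ∀ i, (ts i).GoodOcc n a arg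
  | .eEq t t' => t.GoodOcc n a arg ∧ t'.GoodOcc n a arg
  | .eNe t t' => t.GoodOcc n a arg ∧ t'.GoodOcc n a arg
  | .rvar _ _ ts => ∀ i, (ts i).GoodOcc n a arg
  | .nrvar _ _ ts => ∀ i, (ts i).GoodOcc n a arg
  | .and φ ψ => φ.GoodOcc n a arg ∧ ψ.GoodOcc n a arg
  | .or φ ψ => φ.GoodOcc n a arg ∧ ψ.GoodOcc n a arg
  | .ex _ φ => φ.GoodOcc n a arg
  | .all _ φ => φ.GoodOcc n a arg
  | .qu _ φ => φ.GoodOcc n a arg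
  | .exrel _ _ φ => φ.GoodOcc n a arg
  | .exfun _ _ φ => φ.GoodOcc n a arg

/-- Replace each occurrence of the function variable named `i` (for `i < n`) by the
fresh first-order variable `ys i`, turning an extended term into a first-order term. -/
def ETerm.unfunc (n : ℕ) (ys : Fin n → ℕ) : ETerm L → L.Term ℕ
  | .var x => FirstOrder.Language.Term.var x
  | .func f ts => FirstOrder.Language.Term.func f (fun i => (ts i).unfunc n ys)
  | .fvar _ name _ =>
      if h : name < n then FirstOrder.Language.Term.var (ys ⟨name, h⟩)
      else FirstOrder.Language.Term.var 0

/-- The formula `θ` obtained from `ψ` by replacing each term `fᵢ(x̄ⁱ)` by the fresh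
variable `yᵢ` (second-order constructs, which do not occur in the intended use,
are mapped to a dummy formula). -/
def EForm.toTForm (n : ℕ) (ys : Fin n → ℕ) : EForm L k → TForm L k
  | .rel R ts => .rel R (fun i => (ts i).unfunc n ys)
  | .nrel R ts => .nrel R (fun i => (ts i).unfunc n ys)
  | .eEq t t' => .tEq (t.unfunc n ys) (t'.unfunc n ys)
  | .eNe t t' => .tNe (t.unfunc n ys) (t'.unfunc n ys)
  | .rvar _ _ _ => .tEq (FirstOrder.Language.Term.var 0) (FirstOrder.Language.Term.var 0)
  | .nrvar _ _ _ => .tEq (FirstOrder.Language.Term.var 0) (FirstOrder.Language.Term.var 0)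
  | .and φ ψ => .and (φ.toTForm n ys) (ψ.toTForm n ys)
  | .or φ ψ => .or (φ.toTForm n ys) (ψ.toTForm n ys)
  | .ex x φ => .ex x (φ.toTForm n ys)
  | .all x φ => .all x (φ.toTForm n ys)
  | .qu zs φ => .qu zs (φ.toTForm n ys)
  | .exrel _ _ φ => φ.toTForm n ys
  | .exfun _ _ φ => φ.toTForm n ys

end TeamSemantics


open TeamSemantics

/-- The independence atom `y ⊥_x̄ y` is equivalent to the dependence
atom `dep(x̄, y)`: a team satisfies `y ⊥_x̄ y` iff it satisfies `dep(x̄, y)`, i.e. iff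
all `s, s' ∈ X` with `s(x̄) = s'(x̄)` satisfy `s(y) = s'(y)`. -/
theorem indep_self_iff_dep
    (L : FirstOrder.Language.{0, 0}) (M : Type u) [L.Structure M]
    (a : ℕ) (xb : Fin a → ℕ) (y : ℕ) (X : Set (ℕ → M)) :
    (TSat (QEmpty.{u} 0) M
        ((TForm.indep xb (fun _ : Fin 1 => y) (fun _ : Fin 1 => y)) : TForm L 0) X ↔
      TSat (QEmpty.{u} 0) M
        ((TForm.dep (fun i => FirstOrder.Language.Term.var (xb i))
          (FirstOrder.Language.Term.var y)) : TForm L 0) X) ∧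
    (TSat (QEmpty.{u} 0) M
        ((TForm.dep (fun i => FirstOrder.Language.Term.var (xb i))
          (FirstOrder.Language.Term.var y)) : TForm L 0) X ↔
      ∀ s ∈ X, ∀ s' ∈ X, (∀ i, s (xb i) = s' (xb i)) → s y = s' y) := by
  constructor
  · constructor
    · intro h s hs s' hs' hx
      obtain ⟨s₀, hs₀, _, h1, h2⟩ := h s hs s' hs' hx
      simp only [Language.Term.realize_var]
      calc s y = s₀ y := (h1 0).symm
        _ = s' y := h2 0
    · intro h s hs s' hs' hx
      refine ⟨s, hs, fun i => rfl, fun i => rfl, fun i => ?_⟩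
      exact h s hs s' hs' (fun i => by simpa using hx i)
  · constructor
    · intro h s hs s' hs' hx
      simpa using h s hs s' hs' (fun i => by simpa using hx i)
    · intro h s hs s' hs' hx
      simpa using h s hs s' hs' (fun i => by simpa using hx i)
end

section
/- For every monotone generalized quantifier Q of type ⟨k⟩, the logic D(Q) is downward closed: for every formula φ of D(Q), every structure M and teams Y ⊆ X, if M,X ⊨ φ then M,Y ⊨ φ. -/
open FirstOrder

universe u

open TeamSemantics

/-- For every monotone generalized quantifier `Q` of type ⟨k⟩, the
logic D(Q) is downward closed: if `M,X ⊨ φ` and `Y ⊆ X` then `M,Y ⊨ φ`. -/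
theorem dq_downward_closed
    (k : ℕ) (Q : Quant.{u} k) (hQ : Q.Mono)
    (L : FirstOrder.Language.{0, 0}) (φ : TForm L k) (hφ : φ.IsDQ)
    (M : Type u) [L.Structure M] (X Y : Set (ℕ → M))
    (hX : TSat Q M φ X) (hYX : Y ⊆ X) :
    TSat Q M φ Y := by
  clear hQ
  induction φ generalizing X Y with
  | rel R ts => exact fun s hs => hX s (hYX hs)
  | nrel R ts => exact fun s hs => hX s (hYX hs)
  | tEq t t' => exact fun s hs => hX s (hYX hs)
  | tNe t t' => exact fun s hs => hX s (hYX hs)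
  | dep ts t => exact fun s hs s' hs' h => hX s (hYX hs) s' (hYX hs') h
  | ndep ts t =>
      exact Set.eq_empty_of_subset_empty (hX ▸ hYX)
  | indep xb yb zb => exact hφ.elim
  | and φ ψ ihφ ihψ =>
      exact ⟨ihφ hφ.1 _ _ hX.1 hYX, ihψ hφ.2 _ _ hX.2 hYX⟩
  | or φ ψ ihφ ihψ =>
      obtain ⟨Y₁, Z₁, hXeq, h1, h2⟩ := hX
      refine ⟨Y ∩ Y₁, Y ∩ Z₁, ?_, ihφ hφ.1 _ _ h1 Set.inter_subset_right,
        ihψ hφ.2 _ _ h2 Set.inter_subset_right⟩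
      rw [← Set.inter_union_distrib_left]
      exact (Set.inter_eq_left.mpr (hXeq ▸ hYX)).symm
  | ex y φ ih =>
      obtain ⟨f, hf⟩ := hX
      exact ⟨f, ih hφ _ _ hf (Set.image_mono hYX)⟩
  | all y φ ih =>
      refine ih hφ _ _ hX ?_
      rintro s' ⟨s, hs, a, rfl⟩
      exact ⟨s, hYX hs, a, rfl⟩
  | qu xs φ ih =>
      obtain ⟨F, hF, hsat⟩ := hX
      refine ⟨F, fun s hs => hF s (hYX hs), ih hφ _ _ hsat ?_⟩
      rintro s' ⟨s, hs, a, ha, rfl⟩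
      exact ⟨s, hYX hs, a, ha, rfl⟩
end

section
/- For every monotone generalized quantifier Q of type ⟨k⟩, the logic D(Q) is local: for every formula φ of D(Q), every structure M and every team X, M,X ⊨ φ if and only if M,(X ↾ FV(φ)) ⊨ φ, where X ↾ FV(φ) = {s ↾ FV(φ) : s ∈ X} and FV(φ) is the set of free variables of φ (all variables occurring in a dependence atom count as free). -/
open FirstOrder

universe u

open TeamSemantics

namespace TeamSemantics

section LocalityProof

variable {L : FirstOrder.Language.{0, 0}} {k : ℕ} {M : Type u} [L.Structure M]

lemma tvar_realize (s s' : ℕ → M) :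
    ∀ t : L.Term ℕ, (∀ v ∈ tvarSet t, s v = s' v) → t.realize s = t.realize s' := by
  intro t
  induction t with
  | var x => intro h; exact h x (by simp [tvarSet])
  | func f ts ih =>
    intro h
    simp only [FirstOrder.Language.Term.realize]
    congr 1
    funext i
    exact ih i fun v hv => h v (by simp only [tvarSet, Set.mem_iUnion]; exact ⟨i, hv⟩)

lemma match_mem {V : Set ℕ} {X Y : Set (ℕ → M)}
    (h : (fun s => V.restrict s) '' X = (fun s => V.restrict s) '' Y)
    {s : ℕ → M} (hs : s ∈ X) : ∃ t, t ∈ Y ∧ ∀ v ∈ V, t v = s v := by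
  have hm : V.restrict s ∈ (fun s => V.restrict s) '' Y := h ▸ Set.mem_image_of_mem _ hs
  obtain ⟨t, ht, hts⟩ := hm
  exact ⟨t, ht, fun v hv => congrFun hts ⟨v, hv⟩⟩

lemma restrict_img_subset {V W : Set ℕ} (hVW : V ⊆ W) {X Y : Set (ℕ → M)}
    (h : (fun s => W.restrict s) '' X = (fun s => W.restrict s) '' Y) :
    (fun s => V.restrict s) '' X ⊆ (fun s => V.restrict s) '' Y := by
  rintro r ⟨s, hs, rfl⟩
  obtain ⟨t, ht, hts⟩ := match_mem h hs
  exact ⟨t, ht, funext fun v => hts v (hVW v.2)⟩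

lemma restrict_img_eq {V W : Set ℕ} (hVW : V ⊆ W) {X Y : Set (ℕ → M)}
    (h : (fun s => W.restrict s) '' X = (fun s => W.restrict s) '' Y) :
    (fun s => V.restrict s) '' X = (fun s => V.restrict s) '' Y :=
  Set.Subset.antisymm (restrict_img_subset hVW h) (restrict_img_subset hVW h.symm)

lemma foldl_upd_congr (xs : Fin k → ℕ) (a : Fin k → M) (p : ℕ) :
    ∀ (l : List (Fin k)) (s t : ℕ → M),
      (s p = t p ∨ ∃ i ∈ l, xs i = p) →
      (l.foldl (fun u i => Function.update u (xs i) (a i)) s) p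
        = (l.foldl (fun u i => Function.update u (xs i) (a i)) t) p := by
  intro l
  induction l with
  | nil =>
    rintro s t (h | ⟨i, hi, _⟩)
    · exact h
    · simp at hi
  | cons j l ih =>
    rintro s t (h | ⟨i, hi, hip⟩) <;> simp only [List.foldl_cons]
    · refine ih _ _ (Or.inl ?_)
      simp [Function.update_apply, h]
    · rcases List.mem_cons.1 hi with rfl | hil
      · refine ih _ _ (Or.inl ?_)
        simp [Function.update_apply, ← hip]
      · exact ih _ _ (Or.inr ⟨i, hil, hip⟩)

lemma updVec_congr {xs : Fin k → ℕ} {a : Fin k → M} {s t : ℕ → M} {p : ℕ}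
    (h : s p = t p ∨ p ∈ Set.range xs) :
    updVec s xs a p = updVec t xs a p := by
  simp only [updVec]
  refine foldl_upd_congr xs a p _ s t ?_
  rcases h with h | ⟨i, hi⟩
  · exact Or.inl h
  · exact Or.inr ⟨i, List.mem_finRange i, hi⟩

lemma tsat_mono {Q : Quant.{u} k} (φ : TForm L k) :
    φ.IsDQ → ∀ X Z : Set (ℕ → M), Z ⊆ X → TSat Q M φ X → TSat Q M φ Z := by
  induction φ with
  | rel R ts => exact fun _ X Z hZX h s hs => h s (hZX hs)
  | nrel R ts => exact fun _ X Z hZX h s hs => h s (hZX hs)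
  | tEq t t' => exact fun _ X Z hZX h s hs => h s (hZX hs)
  | tNe t t' => exact fun _ X Z hZX h s hs => h s (hZX hs)
  | dep ts t => exact fun _ X Z hZX h s hs s' hs' => h s (hZX hs) s' (hZX hs')
  | ndep ts t => exact fun _ X Z hZX h => Set.eq_empty_of_subset_empty (h ▸ hZX)
  | indep xb yb zb => exact fun hφ => hφ.elim
  | and φ ψ ihφ ihψ =>
    rintro ⟨h1, h2⟩ X Z hZX ⟨hA, hB⟩
    exact ⟨ihφ h1 X Z hZX hA, ihψ h2 X Z hZX hB⟩
  | or φ ψ ihφ ihψ =>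
    rintro ⟨h1, h2⟩ X Z hZX ⟨A, B, rfl, hA, hB⟩
    refine ⟨Z ∩ A, Z ∩ B, ?_, ihφ h1 A _ Set.inter_subset_right hA,
      ihψ h2 B _ Set.inter_subset_right hB⟩
    rw [← Set.inter_union_distrib_left]
    exact (Set.inter_eq_left.2 hZX).symm
  | ex y φ ih =>
    rintro h1 X Z hZX ⟨f, hf⟩
    exact ⟨f, ih h1 _ _ (Set.image_mono hZX) hf⟩
  | all y φ ih =>
    intro h1 X Z hZX h
    refine ih h1 _ _ ?_ h
    rintro s' ⟨s, hs, a, rfl⟩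
    exact ⟨s, hZX hs, a, rfl⟩
  | qu xs φ ih =>
    rintro h1 X Z hZX ⟨F, hF, hsat⟩
    refine ⟨F, fun s hs => hF s (hZX hs), ih h1 _ _ ?_ hsat⟩
    rintro s' ⟨s, hs, a, ha, rfl⟩
    exact ⟨s, hZX hs, a, ha, rfl⟩

lemma tsat_of_img_subset {Q : Quant.{u} k} {φ : TForm L k} (h1 : φ.IsDQ)
    (loc : ∀ X Y : Set (ℕ → M),
      (fun s => (φ.FV).restrict s) '' X = (fun s => (φ.FV).restrict s) '' Y →
      TSat Q M φ X → TSat Q M φ Y)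
    {X' Y' : Set (ℕ → M)}
    (hsub : (fun s => (φ.FV).restrict s) '' Y' ⊆ (fun s => (φ.FV).restrict s) '' X')
    (hf : TSat Q M φ X') : TSat Q M φ Y' := by
  refine loc {w ∈ X' | (fun s => (φ.FV).restrict s) w ∈ (fun s => (φ.FV).restrict s) '' Y'} Y'
    ?_ (tsat_mono φ h1 X' _ (Set.sep_subset _ _) hf)
  apply Set.Subset.antisymm
  · rintro r ⟨w, ⟨_, hwmem⟩, rfl⟩
    exact hwmem
  · intro r hr
    obtain ⟨w, hw, rfl⟩ := hsub hr
    exact ⟨w, ⟨hw, hr⟩, rfl⟩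

lemma tsat_local_of (Q : Quant.{u} k) (φ : TForm L k) :
    φ.IsDQ → ∀ X Y : Set (ℕ → M),
      (fun s => (φ.FV).restrict s) '' X = (fun s => (φ.FV).restrict s) '' Y →
      TSat Q M φ X → TSat Q M φ Y := by
  classical
  induction φ with
  | rel R ts =>
    intro _ X Y hres h t ht
    obtain ⟨s, hs, hst⟩ := match_mem hres.symm ht
    have he : (fun i => (ts i).realize t) = fun i => (ts i).realize (M := M) s := by
      funext i
      exact tvar_realize t s (ts i) fun v hv => (hst v (Set.mem_iUnion.2 ⟨i, hv⟩)).symm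
    rw [he]
    exact h s hs
  | nrel R ts =>
    intro _ X Y hres h t ht
    obtain ⟨s, hs, hst⟩ := match_mem hres.symm ht
    have he : (fun i => (ts i).realize t) = fun i => (ts i).realize (M := M) s := by
      funext i
      exact tvar_realize t s (ts i) fun v hv => (hst v (Set.mem_iUnion.2 ⟨i, hv⟩)).symm
    rw [he]
    exact h s hs
  | tEq t t' =>
    intro _ X Y hres h u hu
    obtain ⟨s, hs, hsu⟩ := match_mem hres.symm hu
    have e1 : t.realize u = t.realize (M := M) s :=
      tvar_realize u s t fun v hv => (hsu v (Set.mem_union_left _ hv)).symm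
    have e2 : t'.realize u = t'.realize (M := M) s :=
      tvar_realize u s t' fun v hv => (hsu v (Set.mem_union_right _ hv)).symm
    rw [e1, e2]
    exact h s hs
  | tNe t t' =>
    intro _ X Y hres h u hu
    obtain ⟨s, hs, hsu⟩ := match_mem hres.symm hu
    have e1 : t.realize u = t.realize (M := M) s :=
      tvar_realize u s t fun v hv => (hsu v (Set.mem_union_left _ hv)).symm
    have e2 : t'.realize u = t'.realize (M := M) s :=
      tvar_realize u s t' fun v hv => (hsu v (Set.mem_union_right _ hv)).symm
    rw [e1, e2]
    exact h s hs
  | dep ts t =>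
    intro _ X Y hres h u hu u' hu' hag
    obtain ⟨s, hs, hsu⟩ := match_mem hres.symm hu
    obtain ⟨s', hs', hsu'⟩ := match_mem hres.symm hu'
    have hv1 : ∀ i, (ts i).realize s = (ts i).realize (M := M) u := fun i =>
      tvar_realize s u (ts i) fun v hv =>
        hsu v (Set.mem_union_left _ (Set.mem_iUnion.2 ⟨i, hv⟩))
    have hv1' : ∀ i, (ts i).realize s' = (ts i).realize (M := M) u' := fun i =>
      tvar_realize s' u' (ts i) fun v hv =>
        hsu' v (Set.mem_union_left _ (Set.mem_iUnion.2 ⟨i, hv⟩))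
    have ht1 : t.realize s = t.realize (M := M) u :=
      tvar_realize s u t fun v hv => hsu v (Set.mem_union_right _ hv)
    have ht1' : t.realize s' = t.realize (M := M) u' :=
      tvar_realize s' u' t fun v hv => hsu' v (Set.mem_union_right _ hv)
    have := h s hs s' hs' (fun i => by rw [hv1 i, hv1' i]; exact hag i)
    rw [ht1, ht1'] at this
    exact this
  | ndep ts t =>
    intro _ X Y hres h
    have hX : X = ∅ := h
    rw [hX, Set.image_empty] at hres
    exact Set.image_eq_empty.mp hres.symm
  | indep xb yb zb => exact fun hφ => hφ.elim
  | and φ ψ ihφ ihψ =>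
    rintro ⟨h1, h2⟩ X Y hres ⟨hA, hB⟩
    simp only [TForm.FV] at hres
    exact ⟨ihφ h1 X Y (restrict_img_eq Set.subset_union_left hres) hA,
      ihψ h2 X Y (restrict_img_eq Set.subset_union_right hres) hB⟩
  | or φ ψ ihφ ihψ =>
    rintro ⟨h1, h2⟩ X Y hres ⟨A, B, hXAB, hA, hB⟩
    simp only [TForm.FV] at hres
    set V : Set ℕ := TForm.FV φ ∪ TForm.FV ψ with hV
    have key : ∀ C : Set (ℕ → M), C ⊆ X →
        (fun s => V.restrict s) '' C
          = (fun s => V.restrict s) '' {t ∈ Y | ∃ s ∈ C, ∀ v ∈ V, s v = t v} := by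
      intro C hCX
      apply Set.Subset.antisymm
      · rintro r ⟨s, hs, rfl⟩
        obtain ⟨t, ht, hts⟩ := match_mem hres (hCX hs)
        refine ⟨t, ⟨ht, s, hs, fun v hv => (hts v hv).symm⟩, ?_⟩
        exact funext fun v => hts v v.2
      · rintro r ⟨t, ⟨ht, s, hs, hst⟩, rfl⟩
        exact ⟨s, hs, funext fun v => hst v v.2⟩
    refine ⟨{t ∈ Y | ∃ s ∈ A, ∀ v ∈ V, s v = t v},
            {t ∈ Y | ∃ s ∈ B, ∀ v ∈ V, s v = t v}, ?_, ?_, ?_⟩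
    · apply Set.Subset.antisymm
      · intro t ht
        obtain ⟨s, hs, hst⟩ := match_mem hres.symm ht
        rw [hXAB] at hs
        rcases hs with hs | hs
        · exact Or.inl ⟨ht, s, hs, hst⟩
        · exact Or.inr ⟨ht, s, hs, hst⟩
      · rintro t (⟨ht, _⟩ | ⟨ht, _⟩) <;> exact ht
    · refine ihφ h1 A _ ?_ hA
      exact restrict_img_eq Set.subset_union_left
        (key A (by rw [hXAB]; exact Set.subset_union_left))
    · refine ihψ h2 B _ ?_ hB
      exact restrict_img_eq Set.subset_union_right
        (key B (by rw [hXAB]; exact Set.subset_union_right))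
  | ex y φ ih =>
    rintro h1 X Y hres ⟨f, hf⟩
    have h1' : TForm.IsDQ φ := h1
    simp only [TForm.FV] at hres
    refine ⟨fun t =>
      if h' : ∃ s, s ∈ X ∧ ∀ v ∈ TForm.FV φ \ {y}, s v = t v then f h'.choose else t 0, ?_⟩
    refine tsat_of_img_subset h1' (ih h1') ?_ hf
    rintro r ⟨w, ⟨t, ht, rfl⟩, rfl⟩
    have h' : ∃ s, s ∈ X ∧ ∀ v ∈ TForm.FV φ \ {y}, s v = t v := match_mem hres.symm ht
    obtain ⟨hsX, hagree⟩ := h'.choose_spec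
    refine ⟨Function.update h'.choose y (f h'.choose), ⟨h'.choose, hsX, rfl⟩, ?_⟩
    funext v
    obtain ⟨v, hv⟩ := v
    show Function.update h'.choose y (f h'.choose) v
        = Function.update t y (if h'' : ∃ s, s ∈ X ∧ ∀ v ∈ TForm.FV φ \ {y}, s v = t v then
            f h''.choose else t 0) v
    rw [dif_pos h', Function.update_apply, Function.update_apply]
    by_cases hvy : v = y
    · rw [if_pos hvy, if_pos hvy]
    · rw [if_neg hvy, if_neg hvy]
      exact hagree v ⟨hv, hvy⟩
  | all y φ ih =>
    intro h1 X Y hres h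
    have h1' : TForm.IsDQ φ := h1
    simp only [TForm.FV] at hres
    refine ih h1' _ _ ?_ h
    have key : ∀ X Y : Set (ℕ → M),
        (fun s => ((TForm.FV φ) \ {y}).restrict s) '' X
          = (fun s => ((TForm.FV φ) \ {y}).restrict s) '' Y →
        (fun s => (TForm.FV φ).restrict s) '' {s' | ∃ s ∈ X, ∃ a, s' = Function.update s y a}
          ⊆ (fun s => (TForm.FV φ).restrict s)
              '' {s' | ∃ s ∈ Y, ∃ a, s' = Function.update s y a} := by
      intro X Y hres
      rintro r ⟨w, ⟨s, hs, a, rfl⟩, rfl⟩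
      obtain ⟨t, ht, hts⟩ := match_mem hres hs
      refine ⟨Function.update t y a, ⟨t, ht, a, rfl⟩, ?_⟩
      funext v
      obtain ⟨v, hv⟩ := v
      show Function.update t y a v = Function.update s y a v
      rw [Function.update_apply, Function.update_apply]
      by_cases hvy : v = y
      · rw [if_pos hvy, if_pos hvy]
      · rw [if_neg hvy, if_neg hvy]
        exact hts v ⟨hv, hvy⟩
    exact Set.Subset.antisymm (key X Y hres) (key Y X hres.symm)
  | qu xs φ ih =>
    rintro h1 X Y hres ⟨F, hF, hsat⟩
    simp only [TForm.FV] at hres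
    refine ⟨fun t =>
      if h' : ∃ s, s ∈ X ∧ ∀ v ∈ TForm.FV φ \ Set.range xs, s v = t v then F h'.choose
      else ∅, fun t ht => ?_, ?_⟩
    · have h' : ∃ s, s ∈ X ∧ ∀ v ∈ TForm.FV φ \ Set.range xs, s v = t v :=
        match_mem hres.symm ht
      show (if h'' : ∃ s, s ∈ X ∧ ∀ v ∈ TForm.FV φ \ Set.range xs, s v = t v then F h''.choose
        else ∅) ∈ Q M
      rw [dif_pos h']
      exact hF _ h'.choose_spec.1
    · have h1' : TForm.IsDQ φ := h1
      refine tsat_of_img_subset h1' (ih h1') ?_ hsat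
      rintro r ⟨w, ⟨t, ht, a, ha, rfl⟩, rfl⟩
      have h' : ∃ s, s ∈ X ∧ ∀ v ∈ TForm.FV φ \ Set.range xs, s v = t v :=
        match_mem hres.symm ht
      obtain ⟨hsX, hagree⟩ := h'.choose_spec
      have ha' : a ∈ (if h'' : ∃ s, s ∈ X ∧ ∀ v ∈ TForm.FV φ \ Set.range xs, s v = t v then
          F h''.choose else ∅) := ha
      rw [dif_pos h'] at ha'
      refine ⟨updVec h'.choose xs a, ⟨h'.choose, hsX, a, ha', rfl⟩, ?_⟩
      funext v
      obtain ⟨v, hv⟩ := v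
      show updVec h'.choose xs a v = updVec t xs a v
      apply updVec_congr
      by_cases hvr : v ∈ Set.range xs
      · exact Or.inr hvr
      · exact Or.inl (hagree v ⟨hv, hvr⟩)

end LocalityProof

end TeamSemantics

/-- For every monotone generalized quantifier `Q` of type ⟨k⟩, the
logic D(Q) is local: satisfaction depends only on the restrictions of the
assignments to the free variables of `φ`; i.e. `M,X ⊨ φ` iff `M,Y ⊨ φ` whenever `X`
and `Y` have the same set of restrictions to `FV(φ)`. -/
theorem dq_local
    (k : ℕ) (Q : Quant.{u} k) (hQ : Q.Mono)
    (L : FirstOrder.Language.{0, 0}) (φ : TForm L k) (hφ : φ.IsDQ)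
    (M : Type u) [L.Structure M] (X Y : Set (ℕ → M))
    (hres : (fun s => (φ.FV).restrict s) '' X = (fun s => (φ.FV).restrict s) '' Y) :
    TSat Q M φ X ↔ TSat Q M φ Y :=
  ⟨tsat_local_of Q φ hφ X Y hres, tsat_local_of Q φ hφ Y X hres.symm⟩
end

section
/- Flatness of FO(Q)-formulas: let Q be a monotone generalized quantifier of type ⟨k⟩. For every formula φ of first-order logic extended with Q (in negation normal form, containing no dependence atoms), every structure M and every team X, M,X ⊨ φ in team semantics if and only if M,s ⊨ φ in Tarskian semantics for every s ∈ X, where the Tarskian clause for Q is: M,s ⊨ Qx̄ φ iff {ā ∈ M^k : M,s[ā/x̄] ⊨ φ} ∈ Q_M. -/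
open FirstOrder

universe u

open TeamSemantics

/-- Flatness of FO(Q)-formulas: for monotone `Q` and every formula
`φ` of first-order logic extended with `Q`, `M,X ⊨ φ` in team semantics iff
`M,s ⊨ φ` in Tarskian semantics for every `s ∈ X`. -/
theorem foq_flatness
    (k : ℕ) (Q : Quant.{u} k) (hQ : Q.Mono)
    (L : FirstOrder.Language.{0, 0}) (φ : TForm L k) (hφ : φ.IsFOQ)
    (M : Type u) [L.Structure M] (X : Set (ℕ → M)) :
    TSat Q M φ X ↔ ∀ s ∈ X, PSat Q M φ s := by
  induction φ generalizing X with
  | rel R ts => simp [TSat, PSat]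
  | nrel R ts => simp [TSat, PSat]
  | tEq t t' => simp [TSat, PSat]
  | tNe t t' => simp [TSat, PSat]
  | dep ts t => exact absurd hφ (by simp [TForm.IsFOQ])
  | ndep ts t => exact absurd hφ (by simp [TForm.IsFOQ])
  | indep xb yb zb => exact absurd hφ (by simp [TForm.IsFOQ])
  | and φ ψ ihφ ihψ =>
      obtain ⟨h1, h2⟩ := hφ
      simp only [TSat, PSat, ihφ h1, ihψ h2]
      constructor
      · rintro ⟨a, b⟩ s hs; exact ⟨a s hs, b s hs⟩
      · intro h; exact ⟨fun s hs => (h s hs).1, fun s hs => (h s hs).2⟩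
  | or φ ψ ihφ ihψ =>
      obtain ⟨h1, h2⟩ := hφ
      simp only [TSat, PSat]
      constructor
      · rintro ⟨Y, Z, rfl, hY, hZ⟩ s hs
        rcases hs with hs | hs
        · exact Or.inl ((ihφ h1 Y).mp hY s hs)
        · exact Or.inr ((ihψ h2 Z).mp hZ s hs)
      · intro h
        refine ⟨{s ∈ X | PSat Q M φ s}, {s ∈ X | PSat Q M ψ s}, ?_, ?_, ?_⟩
        · ext s; constructor
          · intro hs; rcases h s hs with h' | h'
            · exact Or.inl ⟨hs, h'⟩
            · exact Or.inr ⟨hs, h'⟩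
          · rintro (⟨hs, _⟩ | ⟨hs, _⟩) <;> exact hs
        · exact (ihφ h1 _).mpr fun s hs => hs.2
        · exact (ihψ h2 _).mpr fun s hs => hs.2
  | ex y φ ih =>
      simp only [TSat, PSat]
      constructor
      · rintro ⟨f, hf⟩ s hs
        exact ⟨f s, (ih hφ _).mp hf _ ⟨s, hs, rfl⟩⟩
      · intro h
        classical
        refine ⟨fun s => if hex : ∃ a, PSat Q M φ (Function.update s y a)
            then hex.choose else s 0, ?_⟩
        refine (ih hφ _).mpr ?_
        rintro _ ⟨s, hs, rfl⟩
        have hex : ∃ a, PSat Q M φ (Function.update s y a) := h s hs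
        simp only [hex, dif_pos]
        exact hex.choose_spec
  | all y φ ih =>
      simp only [TSat, PSat]
      rw [ih hφ]
      constructor
      · rintro h s hs a
        exact h _ ⟨s, hs, a, rfl⟩
      · rintro h _ ⟨s, hs, a, rfl⟩
        exact h s hs a
  | qu xs φ ih =>
      simp only [TSat, PSat]
      constructor
      · rintro ⟨F, hF, hsat⟩ s hs
        refine hQ M (F s) _ (hF s hs) ?_
        intro a ha
        exact (ih hφ _).mp hsat _ ⟨s, hs, a, ha, rfl⟩
      · intro h
        refine ⟨fun s => {a | PSat Q M φ (updVec s xs a)}, fun s hs => h s hs, ?_⟩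
        refine (ih hφ _).mpr ?_
        rintro _ ⟨s, hs, a, ha, rfl⟩
        exact ha
end
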